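/- arXiv:2107.04370 — 2 statements merged into one kernel-verified Lean document; each statement's English description precedes it below -/
import Mathlib

section
/- Let f : ℝ^p → ℝ be differentiable, μ-strongly convex and with L-Lipschitz continuous gradient (0 < μ ≤ L), and let x* be its global minimizer. Then for any x ∈ ℝ^p and any stepsize θ with 0 < θ < 2/μ, ‖x − θ∇f(x) − x*‖₂ ≤ τ·‖x − x*‖₂, where τ = max(|1 − μθ|, |1 − Lθ|). -/
set_option maxHeartbeats 1000000


open RealInnerProductSpace

section Aux

variable {E : Type*} [NormedAddCommGroup E] [InnerProductSpace ℝ E] [CompleteSpace E]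

lemma lineDeriv_aux {f : E → ℝ} (hdiff : Differentiable ℝ f) (x d : E) (t : ℝ) :
    HasDerivAt (fun t : ℝ => f (x + t • d)) ⟪gradient f (x + t • d), d⟫ t := by
  have h1 : HasDerivAt (fun t : ℝ => x + t • d) d t := by
    simpa using ((hasDerivAt_id t).smul_const d).const_add x
  have h2 := (hdiff (x + t • d)).hasGradientAt.hasFDerivAt
  have h3 := h2.comp_hasDerivAt t h1
  simp [InnerProductSpace.toDual_apply_apply] at h3 ⊢
  exact h3

/-- Descent lemma: L-Lipschitz gradient gives quadratic upper bound. -/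
lemma descent_aux {f : E → ℝ} (hdiff : Differentiable ℝ f) {L : ℝ}
    (hLip : ∀ a b : E, ‖gradient f a - gradient f b‖ ≤ L * ‖a - b‖) (x y : E) :
    f y ≤ f x + ⟪gradient f x, y - x⟫ + L / 2 * ‖y - x‖ ^ 2 := by
  set d := y - x with hd
  set c1 := ⟪gradient f x, d⟫ with hc1
  set c2 := L / 2 * ‖d‖ ^ 2 with hc2
  set ψ : ℝ → ℝ := fun t => f (x + t • d) - t * c1 - t ^ 2 * c2 with hψ
  have key : ∀ t : ℝ, HasDerivAt ψ (⟪gradient f (x + t • d), d⟫ - c1 - 2 * t * c2) t := by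
    intro t
    have h1 := lineDeriv_aux hdiff x d t
    have h2 := (h1.sub ((hasDerivAt_id t).mul_const c1)).sub ((hasDerivAt_pow 2 t).mul_const c2)
    simp [mul_comm, mul_assoc, mul_left_comm] at h2 ⊢
    exact h2
  have anti : AntitoneOn ψ (Set.Icc 0 1) := by
    apply antitoneOn_of_deriv_nonpos (convex_Icc 0 1)
    · exact fun t _ => (key t).continuousAt.continuousWithinAt
    · exact fun t _ => (key t).differentiableAt.differentiableWithinAt
    · intro t ht
      rw [interior_Icc] at ht
      rw [(key t).deriv]
      have hb := hLip (x + t • d) x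
      have hnorm : ‖(x + t • d) - x‖ = t * ‖d‖ := by
        rw [add_sub_cancel_left, norm_smul, Real.norm_eq_abs, abs_of_pos ht.1]
      rw [hnorm] at hb
      have hcs : ⟪gradient f (x + t • d) - gradient f x, d⟫
          ≤ ‖gradient f (x + t • d) - gradient f x‖ * ‖d‖ := real_inner_le_norm _ _
      rw [inner_sub_left] at hcs
      have hdn : (0:ℝ) ≤ ‖d‖ := norm_nonneg _
      rw [hc1, hc2]
      nlinarith [mul_le_mul_of_nonneg_right hb hdn, hcs]
  have h01 : ψ 1 ≤ ψ 0 := anti (by norm_num) (by norm_num) (by norm_num)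
  have he0 : ψ 0 = f x := by simp [hψ]
  have he1 : ψ 1 = f y - c1 - c2 := by simp [hψ, hd]
  rw [he0, he1] at h01
  linarith

/-- Strong convexity lower bound from gradient monotonicity. -/
lemma lower_aux {f : E → ℝ} (hdiff : Differentiable ℝ f) {μ : ℝ}
    (hsc : ∀ a b : E, μ * ‖a - b‖ ^ 2 ≤ ⟪gradient f a - gradient f b, a - b⟫) (x y : E) :
    f x + ⟪gradient f x, y - x⟫ + μ / 2 * ‖y - x‖ ^ 2 ≤ f y := by
  set d := y - x with hd
  set c1 := ⟪gradient f x, d⟫ with hc1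
  set c2 := μ / 2 * ‖d‖ ^ 2 with hc2
  set ψ : ℝ → ℝ := fun t => f (x + t • d) - t * c1 - t ^ 2 * c2 with hψ
  have key : ∀ t : ℝ, HasDerivAt ψ (⟪gradient f (x + t • d), d⟫ - c1 - 2 * t * c2) t := by
    intro t
    have h1 := lineDeriv_aux hdiff x d t
    have h2 := (h1.sub ((hasDerivAt_id t).mul_const c1)).sub ((hasDerivAt_pow 2 t).mul_const c2)
    simp [mul_comm, mul_assoc, mul_left_comm] at h2 ⊢
    exact h2
  have mono : MonotoneOn ψ (Set.Icc 0 1) := by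
    apply monotoneOn_of_deriv_nonneg (convex_Icc 0 1)
    · exact fun t _ => (key t).continuousAt.continuousWithinAt
    · exact fun t _ => (key t).differentiableAt.differentiableWithinAt
    · intro t ht
      rw [interior_Icc] at ht
      rw [(key t).deriv]
      have hb := hsc (x + t • d) x
      have hstep : (x + t • d) - x = t • d := add_sub_cancel_left x _
      rw [hstep, real_inner_smul_right, norm_smul, Real.norm_eq_abs, abs_of_pos ht.1,
        inner_sub_left] at hb
      -- hb : μ * (t * ‖d‖)^2 ≤ t * (⟪g(x+td), d⟫ - ⟪g x, d⟫)
      have ht0 := ht.1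
      rw [hc1, hc2]
      nlinarith [hb, ht0]
  have h01 : ψ 0 ≤ ψ 1 := mono (by norm_num) (by norm_num) (by norm_num)
  have he0 : ψ 0 = f x := by simp [hψ]
  have he1 : ψ 1 = f y - c1 - c2 := by simp [hψ, hd]
  rw [he0, he1] at h01
  linarith

/-- Strong co-coercivity of the gradient of a strongly convex smooth function. -/
lemma strong_coco {f : E → ℝ} (hdiff : Differentiable ℝ f) {μ L : ℝ} (hμ : 0 < μ) (hμL : μ ≤ L)
    (hsc : ∀ a b : E, μ * ‖a - b‖ ^ 2 ≤ ⟪gradient f a - gradient f b, a - b⟫)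
    (hLip : ∀ a b : E, ‖gradient f a - gradient f b‖ ≤ L * ‖a - b‖) (a b : E) :
    ‖gradient f a - gradient f b‖ ^ 2 + μ * L * ‖a - b‖ ^ 2
      ≤ (μ + L) * ⟪gradient f a - gradient f b, a - b⟫ := by
  rcases eq_or_lt_of_le hμL with heq | hlt
  · -- μ = L : Cauchy-Schwarz forces near-equality
    subst heq
    have h1 := hsc a b
    have h2 := hLip a b
    have hdn : (0:ℝ) ≤ ‖a - b‖ := norm_nonneg _
    nlinarith [mul_le_mul_of_nonneg_right h2 (norm_nonneg (gradient f a - gradient f b)),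
      mul_le_mul_of_nonneg_right h2 hdn, sq_nonneg ‖gradient f a - gradient f b‖]
  · -- μ < L
    set k := (L - μ)⁻¹ with hk
    have hKpos : (0:ℝ) < L - μ := by linarith
    have hKk : (L - μ) * k = 1 := mul_inv_cancel₀ (ne_of_gt hKpos)
    -- key one-sided inequality
    have key : ∀ v w : E, f v + ⟪gradient f v, w - v⟫ + μ / 2 * ‖w - v‖ ^ 2
        + k / 2 * ‖(gradient f w - gradient f v) - μ • (w - v)‖ ^ 2 ≤ f w := by
      intro v w
      set u := (gradient f w - gradient f v) - μ • (w - v) with hu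
      set z := w - k • u with hz
      have hlo := lower_aux hdiff hsc v z
      have hup := descent_aux hdiff hLip w z
      -- expansions
      have e1 : ⟪gradient f v, z - v⟫ = ⟪gradient f v, w - v⟫ - k * ⟪gradient f v, u⟫ := by
        rw [hz, show w - k • u - v = (w - v) - k • u by abel, inner_sub_right,
          real_inner_smul_right]
      have e2 : ‖z - v‖ ^ 2 = ‖w - v‖ ^ 2 - 2 * (k * ⟪w - v, u⟫) + k ^ 2 * ‖u‖ ^ 2 := by
        rw [hz, show w - k • u - v = (w - v) - k • u by abel, norm_sub_sq_real,
          real_inner_smul_right, norm_smul, Real.norm_eq_abs, mul_pow, sq_abs]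
      have e3 : ⟪gradient f w, z - w⟫ = -(k * ⟪gradient f w, u⟫) := by
        rw [hz, show w - k • u - w = -(k • u) by abel, inner_neg_right, real_inner_smul_right]
      have e4 : ‖z - w‖ ^ 2 = k ^ 2 * ‖u‖ ^ 2 := by
        rw [hz, show w - k • u - w = -(k • u) by abel, norm_neg, norm_smul,
          Real.norm_eq_abs, mul_pow, sq_abs]
      have e5 : ⟪gradient f w, u⟫ - ⟪gradient f v, u⟫ = ‖u‖ ^ 2 + μ * ⟪w - v, u⟫ := by
        have : ⟪gradient f w, u⟫ - ⟪gradient f v, u⟫ = ⟪gradient f w - gradient f v, u⟫ := by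
          rw [inner_sub_left]
        rw [this, show gradient f w - gradient f v = u + μ • (w - v) by rw [hu]; abel,
          inner_add_left, real_inner_self_eq_norm_sq, real_inner_smul_left, real_inner_comm]
      rw [e1, e2] at hlo
      rw [e3, e4] at hup
      -- multiply e5 by k
      have e5k : k * ⟪gradient f w, u⟫ - k * ⟪gradient f v, u⟫
          = k * ‖u‖ ^ 2 + k * (μ * ⟪w - v, u⟫) := by
        have := congrArg (fun r => k * r) e5
        simpa [mul_sub, mul_add] using this
      have e6 : (L - μ) * (k ^ 2 * ‖u‖ ^ 2) = k * ‖u‖ ^ 2 := by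
        calc (L - μ) * (k ^ 2 * ‖u‖ ^ 2) = ((L - μ) * k) * (k * ‖u‖ ^ 2) := by ring
        _ = k * ‖u‖ ^ 2 := by rw [hKk, one_mul]
      nlinarith [hlo, hup, e5k, e6]
    have k1 := key a b
    have k2 := key b a
    have hsum : ⟪gradient f a, b - a⟫ + ⟪gradient f b, a - b⟫
        = -⟪gradient f a - gradient f b, a - b⟫ := by
      rw [inner_sub_left, show (b:E) - a = -(a - b) by abel, inner_neg_right]
      ring
    have hnn : ‖(gradient f b - gradient f a) - μ • (b - a)‖
        = ‖(gradient f a - gradient f b) - μ • (a - b)‖ := by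
      rw [show (gradient f b - gradient f a) - μ • (b - a)
        = -((gradient f a - gradient f b) - μ • (a - b)) by module, norm_neg]
    have hns : ‖b - a‖ = ‖a - b‖ := by rw [show (b:E) - a = -(a - b) by abel, norm_neg]
    rw [hnn, hns] at k1
    -- combine: c ≥ μ s + k * W with W = ‖u‖²
    set c := ⟪gradient f a - gradient f b, a - b⟫ with hc
    set s := ‖a - b‖ ^ 2 with hs
    set W := ‖(gradient f a - gradient f b) - μ • (a - b)‖ ^ 2 with hW
    have hcomb : μ * s + k * W ≤ c := by
      have := hsum
      nlinarith [k1, k2]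
    have hWe : W = ‖gradient f a - gradient f b‖ ^ 2 - 2 * (μ * c) + μ ^ 2 * s := by
      rw [hW, norm_sub_sq_real, real_inner_smul_right, norm_smul, Real.norm_eq_abs,
        mul_pow, sq_abs, hc, hs]
      try ring
    -- multiply hcomb by (L - μ) and use hKk
    have hfin := mul_le_mul_of_nonneg_left hcomb (le_of_lt hKpos)
    have e7 : (L - μ) * (k * W) = W := by
      calc (L - μ) * (k * W) = ((L - μ) * k) * W := by ring
      _ = W := by rw [hKk, one_mul]
    nlinarith [hfin, e7, hWe]

end Aux

/-- If `f : ℝ^p → ℝ` is differentiable, `μ`-strongly convex with `L`-Lipschitz gradient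
(`0 < μ ≤ L`) and `x*` is its global minimizer, then for any `x` and any `0 < θ < 2/μ`,
`‖x - θ∇f(x) - x*‖ ≤ max (|1 - μθ|) (|1 - Lθ|) * ‖x - x*‖`. -/
theorem stmt3 {p : ℕ} (μ L : ℝ) (hμ : 0 < μ) (hμL : μ ≤ L)
    (f : EuclideanSpace ℝ (Fin p) → ℝ) (hdiff : Differentiable ℝ f)
    (hsc : ∀ x y : EuclideanSpace ℝ (Fin p),
      μ * ‖x - y‖ ^ 2 ≤ ⟪gradient f x - gradient f y, x - y⟫)
    (hLip : ∀ x y : EuclideanSpace ℝ (Fin p),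
      ‖gradient f x - gradient f y‖ ≤ L * ‖x - y‖)
    (xstar : EuclideanSpace ℝ (Fin p)) (hmin : ∀ y, f xstar ≤ f y)
    (x : EuclideanSpace ℝ (Fin p)) (θ : ℝ) (hθ : 0 < θ) (hθ2 : θ < 2 / μ) :
    ‖x - θ • gradient f x - xstar‖ ≤ max |1 - μ * θ| |1 - L * θ| * ‖x - xstar‖ := by
  have hL : 0 < L := lt_of_lt_of_le hμ hμL
  -- Step 1: gradient at minimizer is zero
  have hg0 : gradient f xstar = 0 := by
    have hdesc := descent_aux hdiff hLip xstar (xstar - (1 / L) • gradient f xstar)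
    have h1 : xstar - (1 / L) • gradient f xstar - xstar = -((1 / L) • gradient f xstar) := by
      abel
    rw [h1, inner_neg_right, real_inner_smul_right, real_inner_self_eq_norm_sq,
      norm_neg, norm_smul, Real.norm_eq_abs, abs_of_pos (by positivity : (0:ℝ) < 1 / L),
      mul_pow] at hdesc
    have hm := hmin (xstar - (1 / L) • gradient f xstar)
    have h2 : L / 2 * ((1 / L) ^ 2 * ‖gradient f xstar‖ ^ 2)
        = 1 / 2 * (1 / L * ‖gradient f xstar‖ ^ 2) := by
      field_simp
    have h3 : (0:ℝ) < 1 / L := by positivity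
    have h4 : 1 / L * ‖gradient f xstar‖ ^ 2 ≤ 0 := by linarith [hm, hdesc, h2]
    have h5 : ‖gradient f xstar‖ ^ 2 ≤ 0 := by nlinarith [h4, h3]
    have h6 : ‖gradient f xstar‖ = 0 := by nlinarith [norm_nonneg (gradient f xstar)]
    exact norm_eq_zero.mp h6
  -- notation
  have hcoco := strong_coco hdiff hμ hμL hsc hLip x xstar
  rw [hg0, sub_zero] at hcoco
  have hLip' := hLip x xstar
  rw [hg0, sub_zero] at hLip'
  have hsc' := hsc x xstar
  rw [hg0, sub_zero] at hsc'
  set u := gradient f x with hu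
  set d := x - xstar with hd
  set c := ⟪u, d⟫ with hc
  set s := ‖d‖ ^ 2 with hs
  set t := ‖u‖ ^ 2 with ht
  -- t ≤ L² s
  have htL : t ≤ L ^ 2 * s := by
    rw [ht, hs]
    nlinarith [hLip', norm_nonneg u, norm_nonneg d]
  -- t ≥ μ² s
  have htμ : μ ^ 2 * s ≤ t := by
    rcases eq_or_lt_of_le (norm_nonneg d) with hd0 | hd0
    · rw [ht, hs, ← hd0]
      nlinarith [norm_nonneg u, hLip', hd0.symm]
    · have hcs : ⟪u, d⟫ ≤ ‖u‖ * ‖d‖ := real_inner_le_norm _ _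
      have h1 : μ * ‖d‖ ≤ ‖u‖ := by
        have h2 : μ * ‖d‖ * ‖d‖ ≤ ‖u‖ * ‖d‖ := by nlinarith [hsc', hcs]
        exact le_of_mul_le_mul_right h2 hd0
      rw [ht, hs]
      nlinarith [h1, norm_nonneg d, hμ.le]
  -- norm expansion
  have hexp : ‖x - θ • u - xstar‖ ^ 2 = s - 2 * θ * c + θ ^ 2 * t := by
    rw [show x - θ • u - xstar = d - θ • u by rw [hd]; abel, norm_sub_sq_real,
      real_inner_smul_right, norm_smul, Real.norm_eq_abs, mul_pow, sq_abs,
      real_inner_comm, ← hc, ← hs, ← ht]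
    ring
  set M := max |1 - μ * θ| |1 - L * θ| with hM
  have hM0 : 0 ≤ M := le_trans (abs_nonneg _) (le_max_left _ _)
  have hs0 : 0 ≤ s := sq_nonneg _
  have hsq : ‖x - θ • u - xstar‖ ^ 2 ≤ (M * ‖d‖) ^ 2 := by
    have hMs : M ^ 2 * s = (M * ‖d‖) ^ 2 := by rw [hs]; ring
    rw [hexp, ← hMs]
    rcases le_or_gt (θ * (μ + L)) 2 with hcase | hcase
    · -- use (1 - μθ)²
      have hb1 : (1 - μ * θ) ^ 2 ≤ M ^ 2 := by
        have := le_max_left |1 - μ * θ| |1 - L * θ|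
        calc (1 - μ * θ) ^ 2 = |1 - μ * θ| ^ 2 := (sq_abs _).symm
        _ ≤ M ^ 2 := by nlinarith [abs_nonneg (1 - μ * θ)]
      have hstep : s - 2 * θ * c + θ ^ 2 * t ≤ (1 - μ * θ) ^ 2 * s := by
        nlinarith [hcoco, htμ, mul_nonneg (mul_nonneg hθ.le
          (by linarith : (0:ℝ) ≤ 2 - θ * (μ + L))) (by linarith : (0:ℝ) ≤ t - μ ^ 2 * s),
          mul_le_mul_of_nonneg_left hcoco (by positivity : (0:ℝ) ≤ 2 * θ)]
      nlinarith [hstep, hb1, hs0]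
    · -- use (1 - Lθ)²
      have hb1 : (1 - L * θ) ^ 2 ≤ M ^ 2 := by
        have := le_max_right |1 - μ * θ| |1 - L * θ|
        calc (1 - L * θ) ^ 2 = |1 - L * θ| ^ 2 := (sq_abs _).symm
        _ ≤ M ^ 2 := by nlinarith [abs_nonneg (1 - L * θ)]
      have hstep : s - 2 * θ * c + θ ^ 2 * t ≤ (1 - L * θ) ^ 2 * s := by
        nlinarith [hcoco, htL, mul_nonneg (mul_nonneg hθ.le
          (by linarith : (0:ℝ) ≤ θ * (μ + L) - 2)) (by linarith : (0:ℝ) ≤ L ^ 2 * s - t),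
          mul_le_mul_of_nonneg_left hcoco (by positivity : (0:ℝ) ≤ 2 * θ)]
      nlinarith [hstep, hb1, hs0]
  calc ‖x - θ • u - xstar‖ = Real.sqrt (‖x - θ • u - xstar‖ ^ 2) :=
        (Real.sqrt_sq (norm_nonneg _)).symm
  _ ≤ Real.sqrt ((M * ‖d‖) ^ 2) := Real.sqrt_le_sqrt hsq
  _ = M * ‖d‖ := Real.sqrt_sq (by positivity)
end

section
/- Let M = [m_{ij}] be a 3×3 real matrix with all entries nonnegative, which is irreducible in the sense that for every pair of indices (i, j) there exists a positive integer k with (M^k)_{ij} > 0. Let λ* > 0 satisfy m_{11} < λ*, m_{22} < λ*, and m_{33} < λ*. Then every complex eigenvalue of M has modulus strictly less than λ* if and only if det(λ*·I − M) > 0. -/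
set_option maxHeartbeats 1000000


open Matrix

/-- Key Perron–Frobenius-style inequality for `3 × 3` matrices: if a nonnegative
matrix with diagonal entries `< lam` has a nonzero nonnegative "sub-eigenvector"
for the value `lam`, then `det (lam I - M) ≤ 0`. -/
lemma stmt5_key (m11 m12 m13 m21 m22 m23 m31 m32 m33 lam y1 y2 y3 : ℝ)
    (h12 : 0 ≤ m12) (h13 : 0 ≤ m13) (h21 : 0 ≤ m21) (h23 : 0 ≤ m23)
    (h31 : 0 ≤ m31) (h32 : 0 ≤ m32)
    (hd1 : m11 < lam) (hd2 : m22 < lam) (hd3 : m33 < lam)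
    (hy1 : 0 ≤ y1) (hy2 : 0 ≤ y2) (hy3 : 0 ≤ y3) (hy : 0 < y1 + y2 + y3)
    (hc1 : lam * y1 ≤ m11 * y1 + m12 * y2 + m13 * y3)
    (hc2 : lam * y2 ≤ m21 * y1 + m22 * y2 + m23 * y3)
    (hc3 : lam * y3 ≤ m31 * y1 + m32 * y2 + m33 * y3) :
    (lam - m11) * (lam - m22) * (lam - m33) - (lam - m11) * (m23 * m32)
      - (lam - m22) * (m13 * m31) - (lam - m33) * (m12 * m21)
      - m12 * m23 * m31 - m13 * m21 * m32 ≤ 0 := by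
  rcases hy1.eq_or_lt with h1 | h1
  · rcases hy2.eq_or_lt with h2 | h2
    · rcases hy3.eq_or_lt with h3 | h3
      · exfalso; rw [← h1, ← h2, ← h3] at hy; linarith
      · -- y1 = y2 = 0 < y3
        exfalso; rw [← h1, ← h2] at hc3; nlinarith [mul_pos (sub_pos.mpr hd3) h3]
    · rcases hy3.eq_or_lt with h3 | h3
      · -- y1 = y3 = 0 < y2
        exfalso; rw [← h1, ← h3] at hc2; nlinarith [mul_pos (sub_pos.mpr hd2) h2]
      · -- y1 = 0 < y2, y3 : get (lam-m22)(lam-m33) ≤ m23*m32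
        rw [← h1] at hc2 hc3
        have k1 : (lam - m22) * y2 ≤ m23 * y3 := by nlinarith [hc2]
        have k2 : (lam - m33) * y3 ≤ m32 * y2 := by nlinarith
        have k : (lam - m22) * (lam - m33) ≤ m23 * m32 := by
          have hk := mul_le_mul k1 k2
            (mul_nonneg (sub_pos.mpr hd3).le hy3) (mul_nonneg h23 hy3)
          nlinarith [mul_pos h2 h3]
        linarith [mul_nonneg (le_of_lt (sub_pos.mpr hd1)) (sub_nonneg.mpr k),
          mul_nonneg (mul_nonneg (le_of_lt (sub_pos.mpr hd2)) h13) h31,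
          mul_nonneg (mul_nonneg (le_of_lt (sub_pos.mpr hd3)) h12) h21,
          mul_nonneg (mul_nonneg h12 h23) h31, mul_nonneg (mul_nonneg h13 h21) h32]
  · rcases hy2.eq_or_lt with h2 | h2
    · rcases hy3.eq_or_lt with h3 | h3
      · -- y2 = y3 = 0 < y1
        exfalso; rw [← h2, ← h3] at hc1; nlinarith [mul_pos (sub_pos.mpr hd1) h1]
      · -- y2 = 0 < y1, y3
        rw [← h2] at hc1 hc3
        have k1 : (lam - m11) * y1 ≤ m13 * y3 := by nlinarith
        have k2 : (lam - m33) * y3 ≤ m31 * y1 := by nlinarith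
        have k : (lam - m11) * (lam - m33) ≤ m13 * m31 := by
          have hk := mul_le_mul k1 k2
            (mul_nonneg (sub_pos.mpr hd3).le hy3) (mul_nonneg h13 hy3)
          nlinarith [mul_pos h1 h3]
        linarith [mul_nonneg (le_of_lt (sub_pos.mpr hd2)) (sub_nonneg.mpr k),
          mul_nonneg (mul_nonneg (le_of_lt (sub_pos.mpr hd1)) h23) h32,
          mul_nonneg (mul_nonneg (le_of_lt (sub_pos.mpr hd3)) h12) h21,
          mul_nonneg (mul_nonneg h12 h23) h31, mul_nonneg (mul_nonneg h13 h21) h32]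
    · rcases hy3.eq_or_lt with h3 | h3
      · -- y3 = 0 < y1, y2
        rw [← h3] at hc1 hc2
        have k1 : (lam - m11) * y1 ≤ m12 * y2 := by nlinarith
        have k2 : (lam - m22) * y2 ≤ m21 * y1 := by nlinarith
        have k : (lam - m11) * (lam - m22) ≤ m12 * m21 := by
          have hk := mul_le_mul k1 k2
            (mul_nonneg (sub_pos.mpr hd2).le hy2) (mul_nonneg h12 hy2)
          nlinarith [mul_pos h1 h2]
        linarith [mul_nonneg (le_of_lt (sub_pos.mpr hd3)) (sub_nonneg.mpr k),
          mul_nonneg (mul_nonneg (le_of_lt (sub_pos.mpr hd1)) h23) h32,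
          mul_nonneg (mul_nonneg (le_of_lt (sub_pos.mpr hd2)) h13) h31,
          mul_nonneg (mul_nonneg h12 h23) h31, mul_nonneg (mul_nonneg h13 h21) h32]
      · -- all positive: the main case
        obtain ⟨p1, hp1def⟩ : ∃ x : ℝ, x = (lam - m11) * y1 := ⟨_, rfl⟩
        obtain ⟨p2, hp2def⟩ : ∃ x : ℝ, x = (lam - m22) * y2 := ⟨_, rfl⟩
        obtain ⟨p3, hp3def⟩ : ∃ x : ℝ, x = (lam - m33) * y3 := ⟨_, rfl⟩
        obtain ⟨u12, hu12def⟩ : ∃ x : ℝ, x = m12 * y2 := ⟨_, rfl⟩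
        obtain ⟨u13, hu13def⟩ : ∃ x : ℝ, x = m13 * y3 := ⟨_, rfl⟩
        obtain ⟨u21, hu21def⟩ : ∃ x : ℝ, x = m21 * y1 := ⟨_, rfl⟩
        obtain ⟨u23, hu23def⟩ : ∃ x : ℝ, x = m23 * y3 := ⟨_, rfl⟩
        obtain ⟨u31, hu31def⟩ : ∃ x : ℝ, x = m31 * y1 := ⟨_, rfl⟩
        obtain ⟨u32, hu32def⟩ : ∃ x : ℝ, x = m32 * y2 := ⟨_, rfl⟩
        have hp1 : 0 < p1 := hp1def ▸ mul_pos (sub_pos.mpr hd1) h1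
        have hp2 : 0 < p2 := hp2def ▸ mul_pos (sub_pos.mpr hd2) h2
        have hp3 : 0 < p3 := hp3def ▸ mul_pos (sub_pos.mpr hd3) h3
        have hu12 : 0 ≤ u12 := hu12def ▸ mul_nonneg h12 hy2
        have hu13 : 0 ≤ u13 := hu13def ▸ mul_nonneg h13 hy3
        have hu21 : 0 ≤ u21 := hu21def ▸ mul_nonneg h21 hy1
        have hu23 : 0 ≤ u23 := hu23def ▸ mul_nonneg h23 hy3
        have hu31 : 0 ≤ u31 := hu31def ▸ mul_nonneg h31 hy1
        have hu32 : 0 ≤ u32 := hu32def ▸ mul_nonneg h32 hy2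
        have he1 : 0 ≤ u12 + u13 - p1 := by
          rw [hp1def, hu12def, hu13def]; linarith [hc1]
        have he2 : 0 ≤ u21 + u23 - p2 := by
          rw [hp2def, hu21def, hu23def]; linarith [hc2]
        have he3 : 0 ≤ u31 + u32 - p3 := by
          rw [hp3def, hu31def, hu32def]; linarith [hc3]
        have hs1 : 0 < u12 + u13 := by linarith
        have hs2 : 0 < u21 + u23 := by linarith
        have hs3 : 0 < u31 + u32 := by linarith
        -- the certificate identity
        have key : 0 ≤ (u12 + u13) * (u21 + u23) * (u31 + u32) *
            (p1 * (u23 * u32) + p2 * (u13 * u31) + p3 * (u12 * u21)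
              + (u12 * u23 * u31 + u13 * u21 * u32) - p1 * p2 * p3) := by
          have hid : (u12 + u13) * (u21 + u23) * (u31 + u32) *
              (p1 * (u23 * u32) + p2 * (u13 * u31) + p3 * (u12 * u21)
                + (u12 * u23 * u31 + u13 * u21 * u32) - p1 * p2 * p3)
            = ((u12 + u13) * (u23 * u32) + (u21 + u23) * (u13 * u31)
                  + (u12 * u23 * u31 + u13 * u21 * u32))
                * (p1 * p2 * (u31 + u32 - p3))
              + ((u12 + u13) * (u23 * u32) + (u31 + u32) * (u12 * u21)
                  + (u12 * u23 * u31 + u13 * u21 * u32))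
                * (p1 * (u21 + u23 - p2) * p3)
              + ((u21 + u23) * (u13 * u31) + (u31 + u32) * (u12 * u21)
                  + (u12 * u23 * u31 + u13 * u21 * u32))
                * ((u12 + u13 - p1) * p2 * p3)
              + ((u12 + u13) * (u23 * u32) + (u12 * u23 * u31 + u13 * u21 * u32))
                * (p1 * (u21 + u23 - p2) * (u31 + u32 - p3))
              + ((u21 + u23) * (u13 * u31) + (u12 * u23 * u31 + u13 * u21 * u32))
                * ((u12 + u13 - p1) * p2 * (u31 + u32 - p3))
              + ((u31 + u32) * (u12 * u21) + (u12 * u23 * u31 + u13 * u21 * u32))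
                * ((u12 + u13 - p1) * (u21 + u23 - p2) * p3)
              + (u12 * u23 * u31 + u13 * u21 * u32)
                * ((u12 + u13 - p1) * (u21 + u23 - p2) * (u31 + u32 - p3)) := by
            ring
          rw [hid]
          have c0 : 0 ≤ u12 * u23 * u31 + u13 * u21 * u32 := by positivity
          have t1 := mul_nonneg (show (0:ℝ) ≤ (u12 + u13) * (u23 * u32)
              + (u21 + u23) * (u13 * u31) + (u12 * u23 * u31 + u13 * u21 * u32) by positivity)
            (mul_nonneg (mul_nonneg hp1.le hp2.le) he3)
          have t2 := mul_nonneg (show (0:ℝ) ≤ (u12 + u13) * (u23 * u32)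
              + (u31 + u32) * (u12 * u21) + (u12 * u23 * u31 + u13 * u21 * u32) by positivity)
            (mul_nonneg (mul_nonneg hp1.le he2) hp3.le)
          have t3 := mul_nonneg (show (0:ℝ) ≤ (u21 + u23) * (u13 * u31)
              + (u31 + u32) * (u12 * u21) + (u12 * u23 * u31 + u13 * u21 * u32) by positivity)
            (mul_nonneg (mul_nonneg he1 hp2.le) hp3.le)
          have t4 := mul_nonneg (show (0:ℝ) ≤ (u12 + u13) * (u23 * u32)
              + (u12 * u23 * u31 + u13 * u21 * u32) by positivity)
            (mul_nonneg (mul_nonneg hp1.le he2) he3)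
          have t5 := mul_nonneg (show (0:ℝ) ≤ (u21 + u23) * (u13 * u31)
              + (u12 * u23 * u31 + u13 * u21 * u32) by positivity)
            (mul_nonneg (mul_nonneg he1 hp2.le) he3)
          have t6 := mul_nonneg (show (0:ℝ) ≤ (u31 + u32) * (u12 * u21)
              + (u12 * u23 * u31 + u13 * u21 * u32) by positivity)
            (mul_nonneg (mul_nonneg he1 he2) hp3.le)
          have t7 := mul_nonneg c0 (mul_nonneg (mul_nonneg he1 he2) he3)
          linarith
        have hVle : p1 * p2 * p3 - (p1 * (u23 * u32) + p2 * (u13 * u31) + p3 * (u12 * u21)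
            + (u12 * u23 * u31 + u13 * u21 * u32)) ≤ 0 := by
          nlinarith [mul_pos (mul_pos hs1 hs2) hs3, key]
        have hD : ((lam - m11) * (lam - m22) * (lam - m33) - (lam - m11) * (m23 * m32)
              - (lam - m22) * (m13 * m31) - (lam - m33) * (m12 * m21)
              - m12 * m23 * m31 - m13 * m21 * m32) * (y1 * y2 * y3)
            = p1 * p2 * p3 - (p1 * (u23 * u32) + p2 * (u13 * u31) + p3 * (u12 * u21)
              + (u12 * u23 * u31 + u13 * u21 * u32)) := by
          rw [hp1def, hp2def, hp3def, hu12def, hu13def, hu21def, hu23def, hu31def, hu32def]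
          ring
        by_contra hcon
        push_neg at hcon
        have hDY := mul_pos hcon (mul_pos (mul_pos h1 h2) h3)
        rw [hD] at hDY
        linarith

/-- For a nonnegative irreducible `3 × 3` matrix `M` whose diagonal entries are all less
than `λ* > 0`, all complex eigenvalues of `M` have modulus `< λ*` if and only if
`det (λ* I - M) > 0`. -/
theorem stmt5 (M : Matrix (Fin 3) (Fin 3) ℝ)
    (hM : ∀ i j, 0 ≤ M i j)
    (hirr : ∀ i j : Fin 3, ∃ k : ℕ, 1 ≤ k ∧ 0 < (M ^ k) i j)
    (lamstar : ℝ) (hlam : 0 < lamstar)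
    (hdiag : ∀ i : Fin 3, M i i < lamstar) :
    (∀ z ∈ spectrum ℂ (M.map (algebraMap ℝ ℂ)), ‖z‖ < lamstar) ↔
      0 < (lamstar • (1 : Matrix (Fin 3) (Fin 3) ℝ) - M).det := by
  -- the real scalar matrix mapped to ℂ
  have hmap : ∀ t : ℝ, algebraMap ℂ (Matrix (Fin 3) (Fin 3) ℂ) (t : ℂ)
      - M.map (algebraMap ℝ ℂ)
      = (t • (1 : Matrix (Fin 3) (Fin 3) ℝ) - M).map (algebraMap ℝ ℂ) := by
    intro t
    ext i j
    by_cases hij : i = j <;>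
      simp [Matrix.algebraMap_matrix_apply, hij, Matrix.map_apply, Matrix.sub_apply,
        Matrix.smul_apply, Matrix.one_apply, Algebra.algebraMap_self]
  -- membership in the spectrum in terms of the real determinant
  have hspec_iff : ∀ t : ℝ, (t : ℂ) ∈ spectrum ℂ (M.map (algebraMap ℝ ℂ)) ↔
      (t • (1 : Matrix (Fin 3) (Fin 3) ℝ) - M).det = 0 := by
    intro t
    have hdet_map : ((t • (1 : Matrix (Fin 3) (Fin 3) ℝ) - M).map (algebraMap ℝ ℂ)).det
        = (algebraMap ℝ ℂ) ((t • (1 : Matrix (Fin 3) (Fin 3) ℝ) - M).det) := by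
      rw [RingHom.map_det]; rfl
    rw [spectrum.mem_iff, Matrix.isUnit_iff_isUnit_det, hmap, hdet_map, isUnit_iff_ne_zero,
      not_ne_iff]
    constructor
    · intro h
      have h2 : ((t • (1 : Matrix (Fin 3) (Fin 3) ℝ) - M).det : ℂ) = 0 := by
        rw [← Complex.coe_algebraMap]; exact h
      exact_mod_cast h2
    · intro h; rw [h]; exact map_zero _
  -- explicit cubic form of the determinant
  have hdet_eq : ∀ t : ℝ, (t • (1 : Matrix (Fin 3) (Fin 3) ℝ) - M).det
      = t ^ 3 + (-(M 0 0 + M 1 1 + M 2 2)) * t ^ 2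
        + (M 0 0 * M 1 1 + M 0 0 * M 2 2 + M 1 1 * M 2 2
            - M 0 1 * M 1 0 - M 0 2 * M 2 0 - M 1 2 * M 2 1) * t
        + (-(M 0 0 * (M 1 1 * M 2 2) - M 0 0 * (M 1 2 * M 2 1)
            - M 0 1 * (M 1 0 * M 2 2) + M 0 1 * (M 1 2 * M 2 0)
            + M 0 2 * (M 1 0 * M 2 1) - M 0 2 * (M 1 1 * M 2 0))) := by
    intro t
    rw [Matrix.det_fin_three]
    simp [Matrix.sub_apply, Matrix.smul_apply, Matrix.one_apply]
    ring
  constructor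
  · -- all eigenvalues small ⇒ positive determinant
    intro hspec
    -- the determinant polynomial has no zero at or beyond lamstar
    have hne : ∀ t : ℝ, lamstar ≤ t →
        (t • (1 : Matrix (Fin 3) (Fin 3) ℝ) - M).det ≠ 0 := by
      intro t ht h0
      have hz := hspec _ ((hspec_iff t).mpr h0)
      rw [Complex.norm_real, Real.norm_eq_abs] at hz
      have := le_abs_self t
      linarith
    -- the determinant is positive for large arguments
    obtain ⟨c2, hc2⟩ : ∃ x : ℝ, x = -(M 0 0 + M 1 1 + M 2 2) := ⟨_, rfl⟩
    obtain ⟨c1, hc1⟩ : ∃ x : ℝ, x = M 0 0 * M 1 1 + M 0 0 * M 2 2 + M 1 1 * M 2 2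
        - M 0 1 * M 1 0 - M 0 2 * M 2 0 - M 1 2 * M 2 1 := ⟨_, rfl⟩
    obtain ⟨c0, hc0⟩ : ∃ x : ℝ, x = -(M 0 0 * (M 1 1 * M 2 2) - M 0 0 * (M 1 2 * M 2 1)
        - M 0 1 * (M 1 0 * M 2 2) + M 0 1 * (M 1 2 * M 2 0)
        + M 0 2 * (M 1 0 * M 2 1) - M 0 2 * (M 1 1 * M 2 0)) := ⟨_, rfl⟩
    have hdet_eq' : ∀ t : ℝ, (t • (1 : Matrix (Fin 3) (Fin 3) ℝ) - M).det
        = t ^ 3 + c2 * t ^ 2 + c1 * t + c0 := by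
      intro t; rw [hdet_eq t, hc2, hc1, hc0]
    obtain ⟨T, hT⟩ : ∃ x : ℝ, x = 1 + |c2| + |c1| + |c0| + lamstar := ⟨_, rfl⟩
    have hT1 : 1 ≤ T := by
      rw [hT]; have := abs_nonneg c2; have := abs_nonneg c1; have := abs_nonneg c0; linarith
    have hTlam : lamstar ≤ T := by
      rw [hT]; have := abs_nonneg c2; have := abs_nonneg c1; have := abs_nonneg c0; linarith
    have hTbig : |c2| + |c1| + |c0| + 1 ≤ T := by rw [hT]; linarith
    have hTpos : 0 < (T • (1 : Matrix (Fin 3) (Fin 3) ℝ) - M).det := by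
      rw [hdet_eq']
      nlinarith [le_abs_self c2, neg_abs_le c2, le_abs_self c1, neg_abs_le c1,
        le_abs_self c0, neg_abs_le c0, sq_nonneg T, hT1, hTbig,
        mul_pos (mul_pos (lt_of_lt_of_le one_pos hT1) (lt_of_lt_of_le one_pos hT1))
          (lt_of_lt_of_le one_pos hT1)]
    -- continuity and the intermediate value theorem
    have hcont : Continuous fun t : ℝ => (t • (1 : Matrix (Fin 3) (Fin 3) ℝ) - M).det := by
      have : (fun t : ℝ => (t • (1 : Matrix (Fin 3) (Fin 3) ℝ) - M).det)
          = fun t : ℝ => t ^ 3 + c2 * t ^ 2 + c1 * t + c0 := funext hdet_eq'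
      rw [this]; continuity
    rcases lt_or_ge 0 ((lamstar • (1 : Matrix (Fin 3) (Fin 3) ℝ) - M).det) with h | h
    · exact h
    · exfalso
      have h0 : (0 : ℝ) ∈ Set.Icc ((lamstar • (1 : Matrix (Fin 3) (Fin 3) ℝ) - M).det)
          ((T • (1 : Matrix (Fin 3) (Fin 3) ℝ) - M).det) := ⟨h, hTpos.le⟩
      obtain ⟨x, hx, hx0⟩ := intermediate_value_Icc hTlam hcont.continuousOn h0
      exact hne x hx.1 hx0
  · -- positive determinant ⇒ all eigenvalues small
    intro hdet z hz
    by_contra hge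
    push_neg at hge
    rw [spectrum.mem_iff, Matrix.isUnit_iff_isUnit_det, isUnit_iff_ne_zero, not_not] at hz
    obtain ⟨v, hv0, hveq⟩ := (Matrix.exists_mulVec_eq_zero_iff).mpr hz
    have hMv : ∀ i, z * v i = (M i 0 : ℝ) * v 0 + (M i 1 : ℝ) * v 1 + (M i 2 : ℝ) * v 2 := by
      intro i
      have h1 : (algebraMap ℂ (Matrix (Fin 3) (Fin 3) ℂ) z - M.map (algebraMap ℝ ℂ)) *ᵥ v
          = z • v - (M.map (algebraMap ℝ ℂ)) *ᵥ v := by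
        rw [Matrix.sub_mulVec, Algebra.algebraMap_eq_smul_one, Matrix.smul_mulVec,
          Matrix.one_mulVec]
      rw [h1] at hveq
      have h2 : z • v i - ((M.map (algebraMap ℝ ℂ)) *ᵥ v) i = 0 := by
        have := congrFun hveq i; simpa using this
      have h3 : ((M.map (algebraMap ℝ ℂ)) *ᵥ v) i
          = (M i 0 : ℝ) * v 0 + (M i 1 : ℝ) * v 1 + (M i 2 : ℝ) * v 2 := by
        simp [Matrix.mulVec, dotProduct, Fin.sum_univ_three, Matrix.map_apply]
      rw [h3] at h2
      simpa [sub_eq_zero] using h2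
    set y : Fin 3 → ℝ := fun i => ‖v i‖ with hy
    have hyn : ∀ i, 0 ≤ y i := fun i => norm_nonneg _
    have hcons : ∀ i, lamstar * y i ≤ M i 0 * y 0 + M i 1 * y 1 + M i 2 * y 2 := by
      intro i
      have e3 : ∀ j, ‖((M i j : ℝ) : ℂ) * v j‖ = M i j * y j := by
        intro j
        rw [norm_mul, Complex.norm_real, Real.norm_eq_abs, abs_of_nonneg (hM i j)]
      have t1 := norm_add_le ((M i 0 : ℝ) * v 0 + (M i 1 : ℝ) * v 1)
        ((M i 2 : ℝ) * v 2)
      have t2 := norm_add_le ((M i 0 : ℝ) * v 0) ((M i 1 : ℝ) * v 1)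
      have e4 : lamstar * y i ≤ ‖z‖ * y i :=
        mul_le_mul_of_nonneg_right hge (hyn i)
      have e5 : ‖z‖ * y i
          = ‖((M i 0 : ℝ) : ℂ) * v 0 + (M i 1 : ℝ) * v 1 + (M i 2 : ℝ) * v 2‖ := by
        rw [← hMv i]
        exact (norm_mul z (v i)).symm
      linarith [t1, t2, e3 0, e3 1, e3 2, e4, e5]
    have hysum : 0 < y 0 + y 1 + y 2 := by
      have hex : ∃ i, v i ≠ 0 := by
        by_contra hv
        push_neg at hv
        exact hv0 (funext hv)
      obtain ⟨i, hi⟩ := hex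
      have hyi : 0 < y i := norm_pos_iff.mpr hi
      fin_cases i
      · linarith [hyn 1, hyn 2, show (0:ℝ) < y 0 from hyi]
      · linarith [hyn 0, hyn 2, show (0:ℝ) < y 1 from hyi]
      · linarith [hyn 0, hyn 1, show (0:ℝ) < y 2 from hyi]
    have hkey := stmt5_key (M 0 0) (M 0 1) (M 0 2) (M 1 0) (M 1 1) (M 1 2)
      (M 2 0) (M 2 1) (M 2 2) lamstar (y 0) (y 1) (y 2)
      (hM 0 1) (hM 0 2) (hM 1 0) (hM 1 2) (hM 2 0) (hM 2 1)
      (hdiag 0) (hdiag 1) (hdiag 2) (hyn 0) (hyn 1) (hyn 2) hysum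
      (hcons 0) (hcons 1) (hcons 2)
    have hdd : (lamstar • (1 : Matrix (Fin 3) (Fin 3) ℝ) - M).det
        = (lamstar - M 0 0) * (lamstar - M 1 1) * (lamstar - M 2 2)
          - (lamstar - M 0 0) * (M 1 2 * M 2 1) - (lamstar - M 1 1) * (M 0 2 * M 2 0)
          - (lamstar - M 2 2) * (M 0 1 * M 1 0)
          - M 0 1 * M 1 2 * M 2 0 - M 0 2 * M 1 0 * M 2 1 := by
      rw [hdet_eq]
      ring
    rw [hdd] at hdet
    linarith
end
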